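/- Any separable density matrix $\rho = \sum_i p_i |u_i\rangle\langle u_i|\otimes|v_i\rangle\langle v_i|$ on $\mathbb{C}^2\otimes\mathbb{C}^d$ ($d\geq 2$) satisfies $\langle 2I_2\otimes I_d + (2-d)I_2\otimes B_1 + 2I_2\otimes B_2 + \cdots + 2I_2\otimes B_{d-1} + dA_3\otimes B_1\rangle_\rho \geq \big(\langle dI_2\otimes B_1 + 2A_3\otimes I_d + (2-d)A_3\otimes B_1 + 2A_3\otimes B_2 + \cdots + 2A_3\otimes B_{d-1}\rangle_\rho^2 + d^2\langle A_1\otimes B_d + A_2\otimes B_{d+1}\rangle_\rho^2\big)^{1/2}$ for all $A_i = U\sigma_iU^\dagger$ and $B_j = V\lambda_jV^\dagger$ with $U$ a $2\times 2$ unitary and $V$ a $d\times d$ unitary. -/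

import Mathlib

open Matrix Kronecker
open scoped ComplexOrder

noncomputable section

abbrev M2 : Type := Matrix (Fin 2) (Fin 2) ℂ

def sig1 : M2 := Matrix.single 0 1 1 + Matrix.single 1 0 1
def sig2 : M2 := Complex.I • Matrix.single 0 1 1 - Complex.I • Matrix.single 1 0 1
def sig3 : M2 := Matrix.single 0 0 1 - Matrix.single 1 1 1

/-- partial transpose on the first (2-dimensional) factor -/
def PT {d : ℕ} (ρ : Matrix (Fin 2 × Fin d) (Fin 2 × Fin d) ℂ) :
    Matrix (Fin 2 × Fin d) (Fin 2 × Fin d) ℂ :=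
  fun p q => ρ (q.1, p.2) (p.1, q.2)

def expval {n : Type} [Fintype n] (ρ M : Matrix n n ℂ) : ℝ := ((ρ * M).trace).re

def proj {n : Type} (ψ : n → ℂ) : Matrix n n ℂ := Matrix.vecMulVec ψ (star ψ)

/-- λ_k = |0⟩⟨0| - |k⟩⟨k| for 1 ≤ k ≤ d-1 -/
def lamK (d : ℕ) (hd : 2 ≤ d) (k : Fin d) : Matrix (Fin d) (Fin d) ℂ :=
  Matrix.single ⟨0, by omega⟩ ⟨0, by omega⟩ 1 - Matrix.single k k 1

/-- λ_d = |0⟩⟨1| + |1⟩⟨0| -/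
def lamD (d : ℕ) (hd : 2 ≤ d) : Matrix (Fin d) (Fin d) ℂ :=
  Matrix.single ⟨0, by omega⟩ ⟨1, by omega⟩ 1 + Matrix.single ⟨1, by omega⟩ ⟨0, by omega⟩ 1

/-- λ_{d+1} = i|0⟩⟨1| - i|1⟩⟨0| -/
def lamD1 (d : ℕ) (hd : 2 ≤ d) : Matrix (Fin d) (Fin d) ℂ :=
  Complex.I • Matrix.single ⟨0, by omega⟩ ⟨1, by omega⟩ 1
    - Complex.I • Matrix.single ⟨1, by omega⟩ ⟨0, by omega⟩ 1

/-- A_i = U σ_i U† -/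
def dA (U : M2) (i : Fin 3) : M2 := U * (![sig1, sig2, sig3] i) * Uᴴ

/-- 2 I⊗I + (2-d) I⊗B₁ + Σ_{k=2}^{d-1} 2 I⊗B_k + d A₃⊗B₁ -/
def DObs0 (d : ℕ) (hd : 2 ≤ d) (U : M2) (V : Matrix (Fin d) (Fin d) ℂ) :
    Matrix (Fin 2 × Fin d) (Fin 2 × Fin d) ℂ :=
  (2:ℂ) • ((1:M2) ⊗ₖ (1 : Matrix (Fin d) (Fin d) ℂ))
    + ((2:ℂ) - (d:ℂ)) • ((1:M2) ⊗ₖ (V * lamK d hd ⟨1, by omega⟩ * Vᴴ))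
    + (∑ k ∈ Finset.univ.filter (fun k : Fin d => 2 ≤ (k : ℕ)),
        (2:ℂ) • ((1:M2) ⊗ₖ (V * lamK d hd k * Vᴴ)))
    + (d:ℂ) • (dA U 2 ⊗ₖ (V * lamK d hd ⟨1, by omega⟩ * Vᴴ))

/-- d I⊗B₁ + 2 A₃⊗I + (2-d) A₃⊗B₁ + Σ_{k=2}^{d-1} 2 A₃⊗B_k -/
def DObs1 (d : ℕ) (hd : 2 ≤ d) (U : M2) (V : Matrix (Fin d) (Fin d) ℂ) :
    Matrix (Fin 2 × Fin d) (Fin 2 × Fin d) ℂ :=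
  (d:ℂ) • ((1:M2) ⊗ₖ (V * lamK d hd ⟨1, by omega⟩ * Vᴴ))
    + (2:ℂ) • (dA U 2 ⊗ₖ (1 : Matrix (Fin d) (Fin d) ℂ))
    + ((2:ℂ) - (d:ℂ)) • (dA U 2 ⊗ₖ (V * lamK d hd ⟨1, by omega⟩ * Vᴴ))
    + (∑ k ∈ Finset.univ.filter (fun k : Fin d => 2 ≤ (k : ℕ)),
        (2:ℂ) • (dA U 2 ⊗ₖ (V * lamK d hd k * Vᴴ)))

/-- A₁⊗B_d + A₂⊗B_{d+1} -/
def DObs2 (d : ℕ) (hd : 2 ≤ d) (U : M2) (V : Matrix (Fin d) (Fin d) ℂ) :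
    Matrix (Fin 2 × Fin d) (Fin 2 × Fin d) ℂ :=
  dA U 0 ⊗ₖ (V * lamD d hd * Vᴴ) + dA U 1 ⊗ₖ (V * lamD1 d hd * Vᴴ)

/-!
For a product state `u ⊗ v` put `w = U† u`, `c = V† v`, `α = w₀ c̄₀` and `β = w₁ c̄₁`. Using the
normalisation of `w` and `c`, the three expectation values become `2d(|α|² + |β|²)`,
`2d(|α|² - |β|²)` and `4 Re(ᾱ β)`, so the inequality for product states is
`(|α|² - |β|²)² + 4 (Re ᾱβ)² ≤ (|α|² + |β|²)²`, i.e. `(Re ᾱβ)² ≤ |ᾱβ|²`.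
The left-hand side `√(E₁² + d² E₂²)` is a norm of the pair `(E₁, E₂)` of expectation values,
which are linear in `ρ`, so the triangle inequality carries the bound over to mixtures.
-/

open Complex ComplexConjugate

section PureStates

variable {n : Type} [Fintype n]

lemma trace_proj_mul (u : n → ℂ) (M : Matrix n n ℂ) :
    (proj u * M).trace = star u ⬝ᵥ M *ᵥ u := by
  rw [proj, vecMulVec_mul, trace_vecMulVec, dotProduct_comm, dotProduct_mulVec]

lemma trace_proj_mul_conj (u : n → ℂ) (U H : Matrix n n ℂ) :
    (proj u * (U * H * Uᴴ)).trace = star (Uᴴ *ᵥ u) ⬝ᵥ H *ᵥ (Uᴴ *ᵥ u) := by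
  rw [trace_proj_mul, star_mulVec, ← mulVec_mulVec, ← mulVec_mulVec, dotProduct_mulVec,
    conjTranspose_conjTranspose]

lemma trace_proj_mul_one [DecidableEq n] {u : n → ℂ} (hu : star u ⬝ᵥ u = 1) :
    (proj u * 1).trace = 1 := by
  rw [trace_proj_mul, one_mulVec, hu]

lemma sum_normSq_conjTranspose_mulVec [DecidableEq n] {U : Matrix n n ℂ}
    (hU : U ∈ unitaryGroup n ℂ) {u : n → ℂ} (hu : star u ⬝ᵥ u = 1) :
    ∑ i, normSq ((Uᴴ *ᵥ u) i) = 1 := by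
  have hUU : U * Uᴴ = 1 := mem_unitaryGroup_iff.mp hU
  have hw : star (Uᴴ *ᵥ u) ⬝ᵥ (Uᴴ *ᵥ u) = 1 := by
    have h := trace_proj_mul_conj u U 1
    rwa [mul_one, hUU, trace_proj_mul_one hu, one_mulVec, eq_comm] at h
  have : ((∑ i, normSq ((Uᴴ *ᵥ u) i) : ℝ) : ℂ) = 1 := by
    rw [← hw]
    push_cast
    exact Finset.sum_congr rfl fun i _ => normSq_eq_conj_mul_self
  exact_mod_cast this

variable [DecidableEq n]

lemma star_dotProduct_single_mulVec (a b : n) (w : n → ℂ) :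
    star w ⬝ᵥ single a b 1 *ᵥ w = conj (w a) * w b := by
  simp [dotProduct, mulVec, single, ite_and]

lemma star_dotProduct_single_sub_single_mulVec (a b : n) (w : n → ℂ) :
    star w ⬝ᵥ (single a a 1 - single b b 1) *ᵥ w = ((normSq (w a) - normSq (w b) : ℝ) : ℂ) := by
  simp only [sub_mulVec, dotProduct_sub, star_dotProduct_single_mulVec]
  push_cast
  rw [normSq_eq_conj_mul_self, normSq_eq_conj_mul_self]

lemma star_dotProduct_single_add_single_mulVec (a b : n) (w : n → ℂ) :
    star w ⬝ᵥ (single a b 1 + single b a 1) *ᵥ w = ((2 * (conj (w a) * w b).re : ℝ) : ℂ) := by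
  simp only [add_mulVec, dotProduct_add, star_dotProduct_single_mulVec]
  rw [← add_conj]
  simp [mul_comm]

lemma star_dotProduct_I_smul_single_sub_mulVec (a b : n) (w : n → ℂ) :
    star w ⬝ᵥ (I • single a b 1 - I • single b a 1) *ᵥ w
      = ((-2 * (conj (w a) * w b).im : ℝ) : ℂ) := by
  simp only [sub_mulVec, dotProduct_sub, smul_mulVec, dotProduct_smul,
    star_dotProduct_single_mulVec, smul_eq_mul]
  have hconj : conj (w b) * w a = conj (conj (w a) * w b) := by simp [mul_comm]
  rw [hconj, ← mul_sub, sub_conj]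
  push_cast
  linear_combination (2 * (conj (w a) * w b).im) * I_mul_I

end PureStates

lemma Fin.sum_filter_two_le {d : ℕ} (hd : 2 ≤ d) (f : Fin d → ℝ) :
    ∑ k ∈ Finset.univ.filter (fun k : Fin d => 2 ≤ (k : ℕ)), f k
      = ∑ k, f k - f ⟨0, by omega⟩ - f ⟨1, by omega⟩ := by
  obtain ⟨m, rfl⟩ : ∃ m, d = m + 2 := ⟨d - 2, by omega⟩
  simp [Finset.sum_filter, Fin.sum_univ_succ]

lemma expval_eq_of_trace_eq {m : Type} [Fintype m] {ρ M : Matrix m m ℂ} {r : ℝ}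
    (h : (ρ * M).trace = r) : expval ρ M = r := by
  rw [expval, h, ofReal_re]

lemma expval_sum_smul {m ι : Type} [Fintype m] [Fintype ι] (p : ι → ℝ)
    (ρ : ι → Matrix m m ℂ) (M : Matrix m m ℂ) :
    expval (∑ i, (p i : ℂ) • ρ i) M = ∑ i, p i * expval (ρ i) M := by
  simp only [expval, Matrix.sum_mul, Matrix.smul_mul, Matrix.trace_sum, Matrix.trace_smul,
    smul_eq_mul, re_sum, re_ofReal_mul]

section Observables

variable {d : ℕ} (hd : 2 ≤ d)

lemma trace_proj_mul_dA_zero (U : M2) (u : Fin 2 → ℂ) :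
    (proj u * dA U 0).trace = ((2 * (conj ((Uᴴ *ᵥ u) 0) * (Uᴴ *ᵥ u) 1).re : ℝ) : ℂ) :=
  (trace_proj_mul_conj u U sig1).trans (star_dotProduct_single_add_single_mulVec 0 1 _)

lemma trace_proj_mul_dA_one (U : M2) (u : Fin 2 → ℂ) :
    (proj u * dA U 1).trace = ((-2 * (conj ((Uᴴ *ᵥ u) 0) * (Uᴴ *ᵥ u) 1).im : ℝ) : ℂ) :=
  (trace_proj_mul_conj u U sig2).trans (star_dotProduct_I_smul_single_sub_mulVec 0 1 _)

lemma trace_proj_mul_dA_two (U : M2) (u : Fin 2 → ℂ) :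
    (proj u * dA U 2).trace = ((normSq ((Uᴴ *ᵥ u) 0) - normSq ((Uᴴ *ᵥ u) 1) : ℝ) : ℂ) :=
  (trace_proj_mul_conj u U sig3).trans (star_dotProduct_single_sub_single_mulVec 0 1 _)

variable (V : Matrix (Fin d) (Fin d) ℂ) (v : Fin d → ℂ)

lemma trace_proj_mul_conj_lamK (k : Fin d) :
    (proj v * (V * lamK d hd k * Vᴴ)).trace
      = ((normSq ((Vᴴ *ᵥ v) ⟨0, by omega⟩) - normSq ((Vᴴ *ᵥ v) k) : ℝ) : ℂ) :=
  (trace_proj_mul_conj v V _).trans (star_dotProduct_single_sub_single_mulVec _ _ _)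

lemma trace_proj_mul_conj_lamD :
    (proj v * (V * lamD d hd * Vᴴ)).trace
      = ((2 * (conj ((Vᴴ *ᵥ v) ⟨0, by omega⟩) * (Vᴴ *ᵥ v) ⟨1, by omega⟩).re : ℝ) : ℂ) :=
  (trace_proj_mul_conj v V _).trans (star_dotProduct_single_add_single_mulVec _ _ _)

lemma trace_proj_mul_conj_lamD1 :
    (proj v * (V * lamD1 d hd * Vᴴ)).trace
      = ((-2 * (conj ((Vᴴ *ᵥ v) ⟨0, by omega⟩) * (Vᴴ *ᵥ v) ⟨1, by omega⟩).im : ℝ) : ℂ) :=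
  (trace_proj_mul_conj v V _).trans (star_dotProduct_I_smul_single_sub_mulVec _ _ _)

lemma sum_trace_proj_mul_conj_lamK (hc : ∑ k, normSq ((Vᴴ *ᵥ v) k) = 1) :
    ∑ k ∈ Finset.univ.filter (fun k : Fin d => 2 ≤ (k : ℕ)), (proj v * (V * lamK d hd k * Vᴴ)).trace
      = (((d - 1) * normSq ((Vᴴ *ᵥ v) ⟨0, by omega⟩) + normSq ((Vᴴ *ᵥ v) ⟨1, by omega⟩) - 1 : ℝ)
          : ℂ) := by
  simp only [trace_proj_mul_conj_lamK, ← ofReal_sum, Fin.sum_filter_two_le hd,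
    Finset.sum_sub_distrib, hc, Finset.sum_const, Finset.card_univ, Fintype.card_fin, nsmul_eq_mul]
  push_cast
  ring

end Observables

section ProductStates

variable {d : ℕ} (hd : 2 ≤ d) {U : M2} {V : Matrix (Fin d) (Fin d) ℂ} {u : Fin 2 → ℂ}
  {v : Fin d → ℂ}

lemma normSq_conjTranspose_mulVec_zero_add_one (hU : U ∈ unitaryGroup (Fin 2) ℂ)
    (hu : star u ⬝ᵥ u = 1) :
    (normSq ((Uᴴ *ᵥ u) 0) + normSq ((Uᴴ *ᵥ u) 1) : ℂ) = 1 := by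
  exact_mod_cast (Fin.sum_univ_two _).symm.trans (sum_normSq_conjTranspose_mulVec hU hu)

lemma expval_proj_kronecker_proj_DObs0 (hU : U ∈ unitaryGroup (Fin 2) ℂ)
    (hV : V ∈ unitaryGroup (Fin d) ℂ) (hu : star u ⬝ᵥ u = 1) (hv : star v ⬝ᵥ v = 1) :
    expval (proj u ⊗ₖ proj v) (DObs0 d hd U V)
      = 2 * d * (normSq ((Uᴴ *ᵥ u) 0 * conj ((Vᴴ *ᵥ v) ⟨0, by omega⟩))
          + normSq ((Uᴴ *ᵥ u) 1 * conj ((Vᴴ *ᵥ v) ⟨1, by omega⟩))) := by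
  apply expval_eq_of_trace_eq
  simp only [DObs0, Matrix.mul_add, Matrix.trace_add, Matrix.mul_smul, Matrix.trace_smul,
    Matrix.mul_sum, Matrix.trace_sum, ← Matrix.mul_kronecker_mul, Matrix.trace_kronecker,
    smul_eq_mul, ← Finset.mul_sum]
  rw [sum_trace_proj_mul_conj_lamK hd V v (sum_normSq_conjTranspose_mulVec hV hv),
    trace_proj_mul_one hu, trace_proj_mul_one hv, trace_proj_mul_dA_two, trace_proj_mul_conj_lamK]
  simp only [normSq_mul, normSq_conj]
  push_cast
  linear_combination (-(d : ℂ) * (normSq ((Vᴴ *ᵥ v) ⟨0, by omega⟩)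
    + normSq ((Vᴴ *ᵥ v) ⟨1, by omega⟩))) * normSq_conjTranspose_mulVec_zero_add_one hU hu

lemma expval_proj_kronecker_proj_DObs1 (hU : U ∈ unitaryGroup (Fin 2) ℂ)
    (hV : V ∈ unitaryGroup (Fin d) ℂ) (hu : star u ⬝ᵥ u = 1) (hv : star v ⬝ᵥ v = 1) :
    expval (proj u ⊗ₖ proj v) (DObs1 d hd U V)
      = 2 * d * (normSq ((Uᴴ *ᵥ u) 0 * conj ((Vᴴ *ᵥ v) ⟨0, by omega⟩))
          - normSq ((Uᴴ *ᵥ u) 1 * conj ((Vᴴ *ᵥ v) ⟨1, by omega⟩))) := by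
  apply expval_eq_of_trace_eq
  simp only [DObs1, Matrix.mul_add, Matrix.trace_add, Matrix.mul_smul, Matrix.trace_smul,
    Matrix.mul_sum, Matrix.trace_sum, ← Matrix.mul_kronecker_mul, Matrix.trace_kronecker,
    smul_eq_mul, ← Finset.mul_sum]
  rw [sum_trace_proj_mul_conj_lamK hd V v (sum_normSq_conjTranspose_mulVec hV hv),
    trace_proj_mul_one hu, trace_proj_mul_one hv, trace_proj_mul_dA_two, trace_proj_mul_conj_lamK]
  simp only [normSq_mul, normSq_conj]
  push_cast
  linear_combination (-(d : ℂ) * (normSq ((Vᴴ *ᵥ v) ⟨0, by omega⟩)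
    - normSq ((Vᴴ *ᵥ v) ⟨1, by omega⟩))) * normSq_conjTranspose_mulVec_zero_add_one hU hu

lemma expval_proj_kronecker_proj_DObs2 :
    expval (proj u ⊗ₖ proj v) (DObs2 d hd U V)
      = 4 * (conj ((Uᴴ *ᵥ u) 0 * conj ((Vᴴ *ᵥ v) ⟨0, by omega⟩))
          * ((Uᴴ *ᵥ u) 1 * conj ((Vᴴ *ᵥ v) ⟨1, by omega⟩))).re := by
  apply expval_eq_of_trace_eq
  simp only [DObs2, Matrix.mul_add, Matrix.trace_add, ← Matrix.mul_kronecker_mul,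
    Matrix.trace_kronecker]
  rw [trace_proj_mul_dA_zero, trace_proj_mul_dA_one, trace_proj_mul_conj_lamD,
    trace_proj_mul_conj_lamD1]
  rw [← ofReal_mul, ← ofReal_mul, ← ofReal_add]
  congr 1
  simp only [mul_re, mul_im, conj_re, conj_im]
  ring

end ProductStates

lemma sq_normSq_sub_add_four_re_sq_le (α β : ℂ) :
    (normSq α - normSq β) ^ 2 + 4 * (conj α * β).re ^ 2 ≤ (normSq α + normSq β) ^ 2 := by
  have h := re_sq_le_normSq (conj α * β)
  rw [normSq_mul, normSq_conj] at h
  linear_combination 4 * h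

lemma sqrt_sq_sub_add_mul_sq_le (D : ℝ) (hD : 0 ≤ D) (α β : ℂ) :
    √((2 * D * (normSq α - normSq β)) ^ 2 + D ^ 2 * (4 * (conj α * β).re) ^ 2)
      ≤ 2 * D * (normSq α + normSq β) := by
  refine Real.sqrt_le_iff.mpr
    ⟨mul_nonneg (by positivity) (add_nonneg (normSq_nonneg α) (normSq_nonneg β)), ?_⟩
  have h := mul_le_mul_of_nonneg_left (sq_normSq_sub_add_four_re_sq_le α β)
    (by positivity : (0 : ℝ) ≤ 4 * D ^ 2)
  linear_combination h

lemma sqrt_sq_add_mul_sq_sum_le {ι : Type} (s : Finset ι) (D : ℝ) (p g h : ι → ℝ)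
    (hp : ∀ i ∈ s, 0 ≤ p i) :
    √((∑ i ∈ s, p i * g i) ^ 2 + D ^ 2 * (∑ i ∈ s, p i * h i) ^ 2)
      ≤ ∑ i ∈ s, p i * √(g i ^ 2 + D ^ 2 * h i ^ 2) := by
  have hnorm (x y : ℝ) : √(x ^ 2 + D ^ 2 * y ^ 2) = ‖(x : ℂ) + (D * y : ℝ) * I‖ := by
    rw [norm_add_mul_I, mul_pow]
  have hsum : ((∑ i ∈ s, p i * g i : ℝ) : ℂ) + (D * ∑ i ∈ s, p i * h i : ℝ) * I
      = ∑ i ∈ s, (p i : ℂ) * (g i + (D * h i : ℝ) * I) := by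
    push_cast
    rw [Finset.mul_sum, Finset.sum_mul, ← Finset.sum_add_distrib]
    exact Finset.sum_congr rfl fun i _ => by ring
  calc √((∑ i ∈ s, p i * g i) ^ 2 + D ^ 2 * (∑ i ∈ s, p i * h i) ^ 2)
      = ‖∑ i ∈ s, (p i : ℂ) * (g i + (D * h i : ℝ) * I)‖ := by rw [hnorm, hsum]
    _ ≤ ∑ i ∈ s, ‖(p i : ℂ) * (g i + (D * h i : ℝ) * I)‖ := norm_sum_le _ _
    _ = ∑ i ∈ s, p i * √(g i ^ 2 + D ^ 2 * h i ^ 2) := Finset.sum_congr rfl fun i hi => by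
        rw [norm_mul, norm_real, Real.norm_of_nonneg (hp i hi), hnorm]

lemma sqrt_expval_DObs_le_of_proj_kronecker_proj {d : ℕ} (hd : 2 ≤ d) {U : M2}
    (hU : U ∈ unitaryGroup (Fin 2) ℂ) {V : Matrix (Fin d) (Fin d) ℂ}
    (hV : V ∈ unitaryGroup (Fin d) ℂ) {u : Fin 2 → ℂ} (hu : star u ⬝ᵥ u = 1) {v : Fin d → ℂ}
    (hv : star v ⬝ᵥ v = 1) :
    √((expval (proj u ⊗ₖ proj v) (DObs1 d hd U V)) ^ 2
        + (d : ℝ) ^ 2 * (expval (proj u ⊗ₖ proj v) (DObs2 d hd U V)) ^ 2)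
      ≤ expval (proj u ⊗ₖ proj v) (DObs0 d hd U V) := by
  rw [expval_proj_kronecker_proj_DObs0 hd hU hV hu hv,
    expval_proj_kronecker_proj_DObs1 hd hU hV hu hv, expval_proj_kronecker_proj_DObs2]
  exact sqrt_sq_sub_add_mul_sq_le d d.cast_nonneg _ _

theorem stmt_16_general (d : ℕ) (hd : 2 ≤ d)
    (ρ : Matrix (Fin 2 × Fin d) (Fin 2 × Fin d) ℂ)
    (n : ℕ) (p : Fin n → ℝ) (u : Fin n → (Fin 2 → ℂ)) (v : Fin n → (Fin d → ℂ))
    (hp0 : ∀ i, 0 ≤ p i)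
    (hu : ∀ i, star (u i) ⬝ᵥ u i = 1) (hv : ∀ i, star (v i) ⬝ᵥ v i = 1)
    (hρ : ρ = ∑ i, ((p i : ℝ) : ℂ) • (proj (u i) ⊗ₖ proj (v i)))
    (U : M2) (hU : U ∈ Matrix.unitaryGroup (Fin 2) ℂ)
    (V : Matrix (Fin d) (Fin d) ℂ) (hV : V ∈ Matrix.unitaryGroup (Fin d) ℂ) :
    Real.sqrt ((expval ρ (DObs1 d hd U V))^2 + (d:ℝ)^2 * (expval ρ (DObs2 d hd U V))^2)
      ≤ expval ρ (DObs0 d hd U V) := by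
  subst hρ
  simp only [expval_sum_smul]
  refine (sqrt_sq_add_mul_sq_sum_le _ _ _ _ _ fun i _ => hp0 i).trans ?_
  exact Finset.sum_le_sum fun i _ => mul_le_mul_of_nonneg_left
    (sqrt_expval_DObs_le_of_proj_kronecker_proj hd hU hV (hu i) (hv i)) (hp0 i)

theorem stmt_16 (d : ℕ) (hd : 2 ≤ d)
    (ρ : Matrix (Fin 2 × Fin d) (Fin 2 × Fin d) ℂ)
    (n : ℕ) (p : Fin n → ℝ) (u : Fin n → (Fin 2 → ℂ)) (v : Fin n → (Fin d → ℂ))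
    (hp0 : ∀ i, 0 ≤ p i) (hp1 : ∑ i, p i = 1)
    (hu : ∀ i, star (u i) ⬝ᵥ u i = 1) (hv : ∀ i, star (v i) ⬝ᵥ v i = 1)
    (hρ : ρ = ∑ i, ((p i : ℝ) : ℂ) • (proj (u i) ⊗ₖ proj (v i)))
    (U : M2) (hU : U ∈ Matrix.unitaryGroup (Fin 2) ℂ)
    (V : Matrix (Fin d) (Fin d) ℂ) (hV : V ∈ Matrix.unitaryGroup (Fin d) ℂ) :
    Real.sqrt ((expval ρ (DObs1 d hd U V))^2 + (d:ℝ)^2 * (expval ρ (DObs2 d hd U V))^2)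
      ≤ expval ρ (DObs0 d hd U V) :=
  stmt_16_general d hd ρ n p u v hp0 hu hv hρ U hU V hV
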